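/- arXiv:0810.4691 — 3 statements merged into one kernel-verified Lean document; each statement's English description precedes it below -/
import Mathlib

section
/- Let 2 ≤ p ≤ 4 be real, let 0 < β ≤ 1, and let σ ≥ 0 satisfy σ > 1 - 2/p. Then there is a constant C > 0 such that for every sequence α : ℤ → ℂ with ∑_{k∈ℤ} ⟨k⟩^{-βp/2} |α_k|^p < ∞, one has ∑_{(n,m)∈ℤ²} |α_n|² |α_m|² ⟨n+m⟩^{-2σ} ⟨n² + m²⟩^{-β} ≤ C (∑_{k∈ℤ} ⟨k⟩^{-βp/2} |α_k|^p)^{4/p}. -/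
/-!
Since `⟨n⟩⟨m⟩ ≤ √2 ⟨n² + m²⟩`, the weight `⟨n² + m²⟩^{-β}` hsplits off `⟨n⟩^{-β} ⟨m⟩^{-β}`, so with
`b_k = ⟨k⟩^{-β} |α_k|²` the double sum is at most `2^{β/2} ∑ b_n b_m ⟨n + m⟩^{-2σ}`. The
right-hand side of the estimate is `‖b‖_{p/2}²`, and Young's convolution inequality on `ℤ` bounds
this trilinear sum by `‖b‖_{p/2}² ‖⟨·⟩^{-2σ}‖_r` with `1/r = 2 - 4/p`; the last norm is finite as
soon as `2σ r > 1`, i.e. `σ > 1 - 2/p`.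
-/

/-- The Japanese bracket `⟨x⟩ = (1 + x²)^{1/2}`. -/
noncomputable def jb (x : ℝ) : ℝ := Real.sqrt (1 + x ^ 2)

open MeasureTheory
open scoped ENNReal

namespace ENNReal

theorem tsum_rpow_mul_rpow_mul_rpow_le {ι : Type*} (f g h : ι → ℝ≥0∞) {a b c : ℝ}
    (ha : 0 ≤ a) (hb : 0 ≤ b) (hc : 0 ≤ c) (habc : a + b + c = 1) :
    ∑' i, f i ^ a * g i ^ b * h i ^ c ≤ (∑' i, f i) ^ a * (∑' i, g i) ^ b * (∑' i, h i) ^ c := by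
  let : MeasurableSpace ι := ⊤
  have := lintegral_prod_norm_pow_le (μ := Measure.count) Finset.univ (f := ![f, g, h])
    (fun _ _ => measurable_from_top.aemeasurable) (p := ![a, b, c])
    (by simpa [Fin.sum_univ_three] using habc) (fun i _ => by fin_cases i <;> simpa)
  simpa [lintegral_count, Fin.prod_univ_three, mul_assoc] using this

theorem tsum_mul_tsum {α β : Type*} (f : α → ℝ≥0∞) (g : β → ℝ≥0∞) :
    (∑' a, f a) * ∑' b, g b = ∑' x : α × β, f x.1 * g x.2 := by
  simp only [ENNReal.tsum_prod', ENNReal.tsum_mul_left, ENNReal.tsum_mul_right]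

section AddGroup

variable {G : Type*} [AddGroup G]

theorem tsum_comp_add_mul_snd (W f : G → ℝ≥0∞) :
    ∑' x : G × G, W (x.1 + x.2) * f x.2 = (∑' s, W s) * ∑' m, f m := by
  rw [ENNReal.tsum_prod', ENNReal.tsum_comm, ← ENNReal.tsum_mul_left]
  congr 1 with m
  simp only [ENNReal.tsum_mul_right, ← (Equiv.addRight m).tsum_eq W, Equiv.coe_addRight]

theorem tsum_fst_mul_comp_add (f W : G → ℝ≥0∞) :
    ∑' x : G × G, f x.1 * W (x.1 + x.2) = (∑' n, f n) * ∑' s, W s := by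
  rw [ENNReal.tsum_prod', ← ENNReal.tsum_mul_right]
  congr 1 with n
  simp only [ENNReal.tsum_mul_left, ← (Equiv.addLeft n).tsum_eq W, Equiv.coe_addLeft]

/-- Young's convolution inequality `⟨f ⋆ g, h⟩ ≤ ‖f‖_q ‖g‖_q ‖h‖_r`, `2/q + 1/r = 2`, written for
`h = W^{1/r}`. -/
theorem tsum_mul_mul_rpow_add_le (f g W : G → ℝ≥0∞) {q : ℝ} (hq1 : 1 ≤ q) (hq2 : q ≤ 2) :
    ∑' x : G × G, f x.1 * g x.2 * W (x.1 + x.2) ^ (2 - 2 / q) ≤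
      (∑' n, f n ^ q) ^ q⁻¹ * (∑' m, g m ^ q) ^ q⁻¹ * (∑' s, W s) ^ (2 - 2 / q) := by
  have hq : 0 < q := by linarith
  set a := 2 / q - 1
  set b := 1 - 1 / q
  have ha : 0 ≤ a := by
    simp only [a, sub_nonneg, le_div_iff₀ hq]; linarith
  have hb : 0 ≤ b := by
    simp only [b, sub_nonneg, div_le_iff₀ hq]; linarith
  have hab : a + b = q⁻¹ := by simp only [a, b]; field_simp; ring
  have hbb : b + b = 2 - 2 / q := by simp only [b]; ring
  have hsplit : ∀ x : ℝ≥0∞, x ^ (q * a) * x ^ (q * b) = x := fun x => by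
    rw [← ENNReal.rpow_add_of_nonneg _ _ (by positivity) (by positivity), ← mul_add, hab,
      mul_inv_cancel₀ hq.ne', ENNReal.rpow_one]
  calc ∑' x : G × G, f x.1 * g x.2 * W (x.1 + x.2) ^ (2 - 2 / q)
      = ∑' x : G × G, (f x.1 ^ q * g x.2 ^ q) ^ a * (W (x.1 + x.2) * g x.2 ^ q) ^ b *
          (f x.1 ^ q * W (x.1 + x.2)) ^ b := by
        congr 1 with x
        simp only [ENNReal.mul_rpow_of_nonneg _ _ ha, ENNReal.mul_rpow_of_nonneg _ _ hb,
          ← ENNReal.rpow_mul]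
        conv_lhs => rw [← hsplit (f x.1), ← hsplit (g x.2), ← hbb,
          ENNReal.rpow_add_of_nonneg _ _ hb hb]
        ring
    _ ≤ ((∑' n, f n ^ q) * ∑' m, g m ^ q) ^ a * ((∑' s, W s) * ∑' m, g m ^ q) ^ b *
          ((∑' n, f n ^ q) * ∑' s, W s) ^ b := by
        grw [tsum_rpow_mul_rpow_mul_rpow_le _ _ _ ha hb hb (by ring),
          ← tsum_mul_tsum (f · ^ q) (g · ^ q), tsum_comp_add_mul_snd W (g · ^ q),
          tsum_fst_mul_comp_add (f · ^ q)]
    _ = _ := by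
        simp only [ENNReal.mul_rpow_of_nonneg _ _ ha, ENNReal.mul_rpow_of_nonneg _ _ hb]
        rw [← hab, ← hbb, ENNReal.rpow_add_of_nonneg _ _ ha hb,
          ENNReal.rpow_add_of_nonneg _ _ ha hb, ENNReal.rpow_add_of_nonneg _ _ hb hb]
        ring

end AddGroup

end ENNReal

lemma tsum_le_of_tsum_ofReal_le {ι : Type*} {f : ι → ℝ} {c : ℝ} (hc : 0 ≤ c)
    (h : ∑' i, ENNReal.ofReal (f i) ≤ ENNReal.ofReal c) : ∑' i, f i ≤ c := by
  by_cases hf : Summable f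
  · have hf' : Summable fun i => max (f i) 0 :=
      hf.abs.of_nonneg_of_le (fun _ => le_max_right _ _)
        fun _ => max_le (le_abs_self _) (abs_nonneg _)
    calc ∑' i, f i ≤ ∑' i, max (f i) 0 := hf.tsum_le_tsum (fun _ => le_max_left _ _) hf'
      _ = (∑' i, ENNReal.ofReal (f i)).toReal := by
        simp only [ENNReal.tsum_toReal_eq fun _ => ENNReal.ofReal_ne_top, ENNReal.toReal_ofReal']
      _ ≤ c := ENNReal.toReal_le_of_le_ofReal hc h
  · rwa [tsum_eq_zero_of_not_summable hf]

lemma exists_one_lt_mul_le {t σ : ℝ} (ht : 0 ≤ t) (h : t < σ) : ∃ τ, 1 < τ ∧ τ * t ≤ σ := by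
  have hσt : 0 < σ + t := by linarith
  refine ⟨2 * σ / (σ + t), (one_lt_div hσt).2 (by linarith), ?_⟩
  rw [div_mul_eq_mul_div, div_le_iff₀ hσt]
  nlinarith

lemma jb_pos (x : ℝ) : 0 < jb x := Real.sqrt_pos.2 (by positivity)

lemma jb_rpow_pos (x t : ℝ) : 0 < jb x ^ t := Real.rpow_pos_of_pos (jb_pos x) t

lemma one_le_jb (x : ℝ) : 1 ≤ jb x :=
  Real.one_le_sqrt.2 (by nlinarith [sq_nonneg x])

lemma abs_le_jb (x : ℝ) : |x| ≤ jb x :=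
  Real.abs_le_sqrt (by linarith)

lemma jb_mul_jb_le (x y : ℝ) : jb x * jb y ≤ Real.sqrt 2 * jb (x ^ 2 + y ^ 2) := by
  unfold jb
  rw [← Real.sqrt_mul (by positivity), ← Real.sqrt_mul zero_le_two]
  exact Real.sqrt_le_sqrt (by nlinarith [sq_nonneg (x * y), sq_nonneg (x ^ 2 + y ^ 2 - 1)])

lemma jb_sq_add_sq_rpow_neg_le (x y : ℝ) {β : ℝ} (hβ : 0 ≤ β) :
    jb (x ^ 2 + y ^ 2) ^ (-β) ≤ Real.sqrt 2 ^ β * (jb x ^ (-β) * jb y ^ (-β)) := by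
  have h2 : 0 < Real.sqrt 2 := by positivity
  have hxy : 0 < jb x * jb y := mul_pos (jb_pos x) (jb_pos y)
  calc jb (x ^ 2 + y ^ 2) ^ (-β)
      ≤ (jb x * jb y / Real.sqrt 2) ^ (-β) :=
        Real.rpow_le_rpow_of_nonpos (by positivity)
          (div_le_of_le_mul₀ h2.le (jb_pos _).le (by linarith [jb_mul_jb_le x y]))
          (neg_nonpos.2 hβ)
    _ = Real.sqrt 2 ^ β * (jb x ^ (-β) * jb y ^ (-β)) := by
        rw [Real.div_rpow hxy.le h2.le, Real.mul_rpow (jb_pos x).le (jb_pos y).le,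
          Real.rpow_neg h2.le, div_inv_eq_mul, mul_comm]

lemma summable_jb_rpow_neg {τ : ℝ} (hτ : 1 < τ) : Summable fun s : ℤ => jb s ^ (-τ) := by
  refine (Real.summable_abs_int_rpow hτ).of_norm_bounded_eventually ?_
  filter_upwards [Filter.eventually_cofinite_ne 0] with s hs
  rw [Real.norm_of_nonneg (jb_rpow_pos _ _).le]
  exact Real.rpow_le_rpow_of_nonpos (by simpa using hs) (abs_le_jb _) (by linarith)

lemma jb_rpow_mul_sq_rpow (x : ℝ) {u : ℝ} (hu : 0 ≤ u) (β p : ℝ) :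
    (jb x ^ (-β) * u ^ 2) ^ (p / 2) = jb x ^ (-(β * p / 2)) * u ^ p := by
  rw [Real.mul_rpow (jb_rpow_pos _ _).le (by positivity), ← Real.rpow_mul (jb_pos _).le,
    ← Real.rpow_natCast_mul hu]
  ring_nf

lemma ofReal_mul_mul_jb_rpow_le {u v x y β σ τ r : ℝ} (hu : 0 ≤ u) (hv : 0 ≤ v) (hβ : 0 ≤ β)
    (hr : 0 ≤ r) (hτ : τ * r ≤ σ) :
    ENNReal.ofReal (u * v * jb (x + y) ^ (-σ) * jb (x ^ 2 + y ^ 2) ^ (-β)) ≤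
      ENNReal.ofReal (Real.sqrt 2 ^ β) * (ENNReal.ofReal (jb x ^ (-β) * u) *
        ENNReal.ofReal (jb y ^ (-β) * v) * ENNReal.ofReal (jb (x + y) ^ (-τ)) ^ r) := by
  have := jb_pos x; have := jb_pos y; have := jb_pos (x + y); have := jb_pos (x ^ 2 + y ^ 2)
  rw [ENNReal.ofReal_rpow_of_nonneg (by positivity) hr, ← Real.rpow_mul (jb_pos _).le,
    ← ENNReal.ofReal_mul (by positivity), ← ENNReal.ofReal_mul (by positivity),
    ← ENNReal.ofReal_mul (by positivity)]
  refine ENNReal.ofReal_le_ofReal ?_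
  calc u * v * jb (x + y) ^ (-σ) * jb (x ^ 2 + y ^ 2) ^ (-β)
      ≤ u * v * jb (x + y) ^ (-τ * r) * (Real.sqrt 2 ^ β * (jb x ^ (-β) * jb y ^ (-β))) := by
        have := Real.rpow_le_rpow_of_exponent_le (one_le_jb (x + y)) (by linarith : -σ ≤ -τ * r)
        have := jb_sq_add_sq_rpow_neg_le x y hβ
        gcongr
    _ = _ := by ring

lemma tsum_norm_sq_mul_norm_sq_mul_jb_le {p β σ τ : ℝ} (hp2 : 2 ≤ p) (hp4 : p ≤ 4) (hβ : 0 ≤ β)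
    (hτσ : τ * (2 - 2 / (p / 2)) ≤ 2 * σ) (hS : Summable fun s : ℤ => jb s ^ (-τ))
    (α : ℤ → ℂ) (hα : Summable fun k : ℤ => jb k ^ (-(β * p / 2)) * ‖α k‖ ^ p) :
    ∑' nm : ℤ × ℤ, ‖α nm.1‖ ^ 2 * ‖α nm.2‖ ^ 2 * jb ((nm.1 : ℝ) + nm.2) ^ (-(2 * σ)) *
        jb ((nm.1 : ℝ) ^ 2 + (nm.2 : ℝ) ^ 2) ^ (-β) ≤
      Real.sqrt 2 ^ β * (∑' s : ℤ, jb s ^ (-τ)) ^ (2 - 2 / (p / 2)) *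
        (∑' k : ℤ, jb k ^ (-(β * p / 2)) * ‖α k‖ ^ p) ^ (4 / p) := by
  have hr0 : 0 ≤ 2 - 2 / (p / 2) := by
    have : 2 / (p / 2) ≤ 2 := (div_le_iff₀ (by linarith)).2 (by linarith)
    linarith
  set r := 2 - 2 / (p / 2)
  set S := ∑' s : ℤ, jb s ^ (-τ)
  set B := ∑' k : ℤ, jb k ^ (-(β * p / 2)) * ‖α k‖ ^ p
  have hS0 : 0 ≤ S := tsum_nonneg fun _ => (jb_rpow_pos _ _).le
  have hB0 : 0 ≤ B := tsum_nonneg fun k => mul_nonneg (jb_rpow_pos _ _).le (by positivity)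
  set b : ℤ → ℝ≥0∞ := fun k => ENNReal.ofReal (jb k ^ (-β) * ‖α k‖ ^ 2)
  set W : ℤ → ℝ≥0∞ := fun s => ENNReal.ofReal (jb s ^ (-τ))
  have hb : ∑' k, b k ^ (p / 2) = ENNReal.ofReal B := by
    rw [ENNReal.ofReal_tsum_of_nonneg (fun k => mul_nonneg (jb_rpow_pos _ _).le (by positivity)) hα]
    congr 1 with k
    rw [ENNReal.ofReal_rpow_of_nonneg (mul_nonneg (jb_rpow_pos _ _).le (by positivity))
      (by positivity), jb_rpow_mul_sq_rpow _ (norm_nonneg _)]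
  have hW : ∑' s, W s = ENNReal.ofReal S :=
    (ENNReal.ofReal_tsum_of_nonneg (fun _ => (jb_rpow_pos _ _).le) hS).symm
  refine tsum_le_of_tsum_ofReal_le (by positivity) ?_
  calc _ ≤ ∑' nm : ℤ × ℤ,
          ENNReal.ofReal (Real.sqrt 2 ^ β) * (b nm.1 * b nm.2 * W (nm.1 + nm.2) ^ r) :=
        ENNReal.tsum_le_tsum fun nm => by
          simpa [b, W] using ofReal_mul_mul_jb_rpow_le (u := ‖α nm.1‖ ^ 2) (v := ‖α nm.2‖ ^ 2)
            (x := nm.1) (y := nm.2) (by positivity) (by positivity) hβ hr0 hτσ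
    _ ≤ ENNReal.ofReal (Real.sqrt 2 ^ β) * ((∑' k, b k ^ (p / 2)) ^ (p / 2)⁻¹ *
          (∑' k, b k ^ (p / 2)) ^ (p / 2)⁻¹ * (∑' s, W s) ^ r) := by
        rw [ENNReal.tsum_mul_left]
        gcongr
        exact ENNReal.tsum_mul_mul_rpow_add_le b b W (by linarith) (by linarith)
    _ = _ := by
        have hexp : (p / 2)⁻¹ + (p / 2)⁻¹ = 4 / p := by ring
        rw [hb, hW, ENNReal.ofReal_rpow_of_nonneg hB0 (by positivity),
          ENNReal.ofReal_rpow_of_nonneg hS0 hr0, ← ENNReal.ofReal_mul (by positivity),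
          ← ENNReal.ofReal_mul (by positivity), ← ENNReal.ofReal_mul (by positivity),
          ← Real.rpow_add_of_nonneg hB0 (by positivity) (by positivity), hexp,
          mul_comm (B ^ _), mul_assoc]

theorem stmt3_general (p β σ : ℝ) (hp2 : 2 ≤ p) (hp4 : p ≤ 4) (hβ0 : 0 < β)
    (hσ : 1 - 2 / p < σ) :
    ∃ C : ℝ, 0 < C ∧ ∀ α : ℤ → ℂ,
      Summable (fun k : ℤ => jb (k : ℝ) ^ (-(β * p / 2)) * ‖α k‖ ^ p) →
      (∑' nm : ℤ × ℤ,
          ‖α nm.1‖ ^ 2 * ‖α nm.2‖ ^ 2 * jb ((nm.1 : ℝ) + (nm.2 : ℝ)) ^ (-(2 * σ)) *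
            jb ((nm.1 : ℝ) ^ 2 + (nm.2 : ℝ) ^ 2) ^ (-β))
        ≤ C * (∑' k : ℤ, jb (k : ℝ) ^ (-(β * p / 2)) * ‖α k‖ ^ p) ^ (4 / p) := by
  have hp : 0 < p := by linarith
  have hr : 2 - 2 / (p / 2) = 2 * (1 - 2 / p) := by field_simp
  have hr0 : 0 ≤ 2 - 2 / (p / 2) := by
    have : 2 / p ≤ 1 := (div_le_one hp).2 hp2
    linarith
  obtain ⟨τ, hτ1, hτσ⟩ := exists_one_lt_mul_le hr0 (by linarith : 2 - 2 / (p / 2) < 2 * σ)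
  have hS := summable_jb_rpow_neg hτ1
  have hS0 : 0 < ∑' s : ℤ, jb s ^ (-τ) :=
    hS.tsum_pos (fun _ => (jb_rpow_pos _ _).le) 0 (jb_rpow_pos _ _)
  exact ⟨_, by positivity, tsum_norm_sq_mul_norm_sq_mul_jb_le hp2 hp4 hβ0.le hτσ hS⟩

/-- For `2 ≤ p ≤ 4`, `0 < β ≤ 1`, `σ ≥ 0` with `σ > 1 - 2/p`, there is `C > 0`
such that for every sequence `α : ℤ → ℂ` with `∑_k ⟨k⟩^{-βp/2} |α_k|^p < ∞`,
`∑_{(n,m)∈ℤ²} |α_n|² |α_m|² ⟨n+m⟩^{-2σ} ⟨n²+m²⟩^{-β} ≤ C (∑_k ⟨k⟩^{-βp/2} |α_k|^p)^{4/p}`. -/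
theorem stmt3 (p β σ : ℝ) (hp2 : 2 ≤ p) (hp4 : p ≤ 4) (hβ0 : 0 < β) (hβ1 : β ≤ 1)
    (hσ0 : 0 ≤ σ) (hσ : 1 - 2 / p < σ) :
    ∃ C : ℝ, 0 < C ∧ ∀ α : ℤ → ℂ,
      Summable (fun k : ℤ => jb (k : ℝ) ^ (-(β * p / 2)) * ‖α k‖ ^ p) →
      (∑' nm : ℤ × ℤ,
          ‖α nm.1‖ ^ 2 * ‖α nm.2‖ ^ 2 * jb ((nm.1 : ℝ) + (nm.2 : ℝ)) ^ (-(2 * σ)) *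
            jb ((nm.1 : ℝ) ^ 2 + (nm.2 : ℝ) ^ 2) ^ (-β))
        ≤ C * (∑' k : ℤ, jb (k : ℝ) ^ (-(β * p / 2)) * ‖α k‖ ^ p) ^ (4 / p) :=
  stmt3_general p β σ hp2 hp4 hβ0 hσ
end

section
/- Let γ > 1/2. Then there is a constant C > 0 such that for every y ∈ ℝ and every z ∈ ℝ, ∑_{n∈ℤ} ⟨z + n(n - y)⟩^{-γ} ≤ C. -/
lemma jb_rpow (x γ : ℝ) : jb x ^ (-γ) = (1 + x ^ 2) ^ (-(γ/2)) := by
  rw [jb, Real.sqrt_eq_rpow, ← Real.rpow_mul (by positivity)]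
  norm_num
  ring_nf

lemma sq_rpow (x : ℝ) (hx : 0 ≤ x) (c : ℝ) : (x ^ 2) ^ c = x ^ (2 * c) := by
  rw [← Real.rpow_natCast x 2, ← Real.rpow_mul hx]
  norm_num

lemma nine_ineq (x t : ℝ) (ht0 : 0 ≤ t) (ht1 : t < 1) :
    (1 + |x|) ^ 2 ≤ 9 * (1 + (x - t) ^ 2) := by
  rcases abs_cases x with ⟨h, h'⟩ | ⟨h, h'⟩
  · rw [h]
    nlinarith [sq_nonneg (x - t), sq_nonneg (2*x - 5/2), sq_nonneg (x - 1), mul_nonneg ht0 h',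
      mul_nonneg ht0 ht0, sq_nonneg (x - t - 1)]
  · rw [h]
    nlinarith [sq_nonneg (x - t), mul_nonneg ht0 (neg_nonneg.mpr h'.le), sq_nonneg x,
      mul_nonneg ht0 ht0]

lemma sumB (γ : ℝ) (hγ : 1 / 2 < γ) :
    ∃ S : ℝ, 0 < S ∧ ∀ α : ℝ,
      Summable (fun n : ℤ => (1 + ((n : ℝ) - α) ^ 2) ^ (-γ)) ∧
      (∑' n : ℤ, (1 + ((n : ℝ) - α) ^ 2) ^ (-γ)) ≤ S := by
  have hnat : Summable (fun n : ℕ => (1 + (n : ℝ)) ^ (-(2 * γ))) := by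
    have h0 : Summable (fun n : ℕ => (n : ℝ) ^ (-(2 * γ))) :=
      Real.summable_nat_rpow.mpr (by linarith)
    have h1 := (summable_nat_add_iff 1).mpr h0
    refine h1.congr fun n => ?_
    push_cast
    ring_nf
  have hM : Summable (fun k : ℤ => (9 : ℝ) ^ γ * (1 + |(k : ℝ)|) ^ (-(2 * γ))) := by
    apply Summable.mul_left
    refine Summable.of_nat_of_neg ?_ ?_
    · refine hnat.congr fun n => ?_
      push_cast
      rw [abs_of_nonneg (Nat.cast_nonneg n)]
    · refine hnat.congr fun n => ?_
      push_cast
      rw [abs_neg, abs_of_nonneg (Nat.cast_nonneg n)]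
  refine ⟨∑' k : ℤ, (9 : ℝ) ^ γ * (1 + |(k : ℝ)|) ^ (-(2 * γ)), ?_, fun α => ?_⟩
  · exact Summable.tsum_pos hM (fun k => by positivity) 0 (by positivity)
  · set m : ℤ := ⌊α⌋ with hm
    have ht0 : 0 ≤ Int.fract α := Int.fract_nonneg α
    have ht1 : Int.fract α < 1 := Int.fract_lt_one α
    set f : ℤ → ℝ := fun n => (1 + ((n : ℝ) - α) ^ 2) ^ (-γ) with hf
    have hpt : ∀ k : ℤ, f (k + m) ≤ (9 : ℝ) ^ γ * (1 + |(k : ℝ)|) ^ (-(2 * γ)) := by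
      intro k
      have hkm : ((k + m : ℤ) : ℝ) - α = (k : ℝ) - Int.fract α := by
        rw [Int.fract]
        push_cast
        ring
      have h9 := nine_ineq (k : ℝ) (Int.fract α) ht0 ht1
      have hstep : f (k + m) ≤ ((1 + |(k : ℝ)|) ^ 2 / 9) ^ (-γ) := by
        rw [hf]
        simp only
        rw [hkm]
        exact Real.rpow_le_rpow_of_nonpos (by positivity) (by linarith) (by linarith)
      refine hstep.trans_eq ?_
      rw [Real.div_rpow (by positivity) (by norm_num), sq_rpow _ (by positivity),
        Real.rpow_neg (by norm_num : (0:ℝ) ≤ 9)]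
      rw [div_inv_eq_mul, mul_comm]
      congr 1
      ring_nf
    have hs' : Summable fun k : ℤ => f (k + m) :=
      hM.of_nonneg_of_le (fun k => by positivity) hpt
    have hs : Summable f := by
      have := (Equiv.addRight m).summable_iff (f := f)
      exact this.mp hs'
    constructor
    · exact hs
    · have heq : (∑' n : ℤ, f n) = ∑' k : ℤ, f (k + m) :=
        ((Equiv.addRight m).tsum_eq f).symm
      rw [heq]
      exact Summable.tsum_le_tsum hpt hs' hM

lemma two_rpow_cancel (γ : ℝ) : (2 : ℝ) ^ γ * (2 : ℝ) ^ (-γ) = 1 := by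
  rw [← Real.rpow_add two_pos]
  simp

lemma small_case (γ : ℝ) (hγ : 0 < γ) {w : ℝ} (hw : w ^ 2 < 1) {q c : ℝ} (hc : 0 ≤ c) :
    (1 + q ^ 2) ^ (-(γ / 2)) ≤ 2 ^ γ * ((1 + w ^ 2) ^ (-γ) + c) := by
  have h1 : (1 + q ^ 2) ^ (-(γ / 2)) ≤ 1 :=
    Real.rpow_le_one_of_one_le_of_nonpos (by nlinarith [sq_nonneg q]) (by linarith)
  have h2 : (2 : ℝ) ^ (-γ) ≤ (1 + w ^ 2) ^ (-γ) :=
    Real.rpow_le_rpow_of_nonpos (by positivity) (by nlinarith) (by linarith)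
  calc (1 + q ^ 2) ^ (-(γ / 2)) ≤ 1 := h1
    _ = 2 ^ γ * (2 : ℝ) ^ (-γ) := (two_rpow_cancel γ).symm
    _ ≤ 2 ^ γ * ((1 + w ^ 2) ^ (-γ) + c) := by
        have h2γ : (0:ℝ) ≤ 2 ^ γ := by positivity
        nlinarith [Real.rpow_nonneg (by positivity : (0:ℝ) ≤ 1 + w ^ 2) (-γ)]

lemma four_rpow (γ : ℝ) : (4 : ℝ) ^ (γ / 2) = 2 ^ γ := by
  rw [show (4 : ℝ) = 2 ^ 2 by norm_num, ← Real.rpow_natCast 2 2,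
    ← Real.rpow_mul (by norm_num)]
  norm_num
  rw [show 2 * (γ / 2) = γ by ring]

lemma pt1 (γ : ℝ) (hγ : 0 < γ) (u v : ℝ) :
    (1 + (u * v) ^ 2) ^ (-(γ / 2)) ≤ 2 ^ γ * ((1 + u ^ 2) ^ (-γ) + (1 + v ^ 2) ^ (-γ)) := by
  by_cases hu : u ^ 2 < 1
  · exact small_case γ hγ hu (by positivity)
  by_cases hv : v ^ 2 < 1
  · rw [show (1 + u ^ 2) ^ (-γ) + (1 + v ^ 2) ^ (-γ)
        = (1 + v ^ 2) ^ (-γ) + (1 + u ^ 2) ^ (-γ) by ring]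
    exact small_case γ hγ hv (by positivity)
  push_neg at hu hv
  have hA : (0 : ℝ) < 1 + u ^ 2 := by positivity
  have hB : (0 : ℝ) < 1 + v ^ 2 := by positivity
  have key1 : (1 + u ^ 2) * (1 + v ^ 2) / 4 ≤ 1 + (u * v) ^ 2 := by
    nlinarith [mul_le_mul hu hv (by linarith) (by positivity), sq_nonneg (u*v)]
  have step1 : (1 + (u * v) ^ 2) ^ (-(γ / 2))
      ≤ ((1 + u ^ 2) * (1 + v ^ 2) / 4) ^ (-(γ / 2)) :=
    Real.rpow_le_rpow_of_nonpos (by positivity) key1 (by linarith)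
  set x := (1 + u ^ 2) ^ (-(γ / 2)) with hx
  set y := (1 + v ^ 2) ^ (-(γ / 2)) with hy
  have hxx : x * x = (1 + u ^ 2) ^ (-γ) := by
    rw [hx, ← Real.rpow_add hA]; ring_nf
  have hyy : y * y = (1 + v ^ 2) ^ (-γ) := by
    rw [hy, ← Real.rpow_add hB]; ring_nf
  have step2 : ((1 + u ^ 2) * (1 + v ^ 2) / 4) ^ (-(γ / 2)) = 2 ^ γ * (x * y) := by
    rw [Real.div_rpow (by positivity) (by norm_num),
      Real.mul_rpow hA.le hB.le, Real.rpow_neg (by norm_num : (0:ℝ) ≤ 4),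
      div_inv_eq_mul, four_rpow, hx, hy]
    ring
  have hx0 : 0 ≤ x := Real.rpow_nonneg hA.le _
  have hy0 : 0 ≤ y := Real.rpow_nonneg hB.le _
  have amgm : x * y ≤ x * x + y * y := by nlinarith [sq_nonneg (x - y)]
  calc (1 + (u * v) ^ 2) ^ (-(γ / 2)) ≤ 2 ^ γ * (x * y) := step1.trans_eq step2
    _ ≤ 2 ^ γ * ((1 + u ^ 2) ^ (-γ) + (1 + v ^ 2) ^ (-γ)) := by
        rw [← hxx, ← hyy]
        have : (0:ℝ) ≤ 2 ^ γ := by positivity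
        nlinarith

lemma pt2 (γ : ℝ) (hγ : 0 < γ) (u e : ℝ) (he : 0 ≤ e) :
    (1 + (u ^ 2 + e) ^ 2) ^ (-(γ / 2))
      ≤ 2 ^ γ * ((1 + u ^ 2) ^ (-γ) + (1 + u ^ 2) ^ (-γ)) := by
  have hA : (0 : ℝ) < 1 + u ^ 2 := by positivity
  have key : (1 + u ^ 2) ^ 2 / 4 ≤ 1 + (u ^ 2 + e) ^ 2 := by
    nlinarith [sq_nonneg (u ^ 2 - 1), mul_nonneg he (sq_nonneg u), sq_nonneg e, sq_nonneg u]
  have step1 : (1 + (u ^ 2 + e) ^ 2) ^ (-(γ / 2)) ≤ ((1 + u ^ 2) ^ 2 / 4) ^ (-(γ / 2)) :=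
    Real.rpow_le_rpow_of_nonpos (by positivity) key (by linarith)
  have step2 : ((1 + u ^ 2) ^ 2 / 4) ^ (-(γ / 2)) = 2 ^ γ * (1 + u ^ 2) ^ (-γ) := by
    rw [Real.div_rpow (by positivity) (by norm_num), sq_rpow _ hA.le,
      Real.rpow_neg (by norm_num : (0:ℝ) ≤ 4), div_inv_eq_mul, four_rpow]
    rw [show (2 : ℝ) * -(γ / 2) = -γ by ring]
    ring
  have hnn : 0 ≤ (1 + u ^ 2) ^ (-γ) := Real.rpow_nonneg hA.le _
  have h2γ : (0:ℝ) ≤ 2 ^ γ := by positivity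
  calc (1 + (u ^ 2 + e) ^ 2) ^ (-(γ / 2)) ≤ 2 ^ γ * (1 + u ^ 2) ^ (-γ) := step1.trans_eq step2
    _ ≤ 2 ^ γ * ((1 + u ^ 2) ^ (-γ) + (1 + u ^ 2) ^ (-γ)) := by nlinarith

lemma sum_bound (γ : ℝ) (S : ℝ)
    (hB : ∀ α : ℝ, Summable (fun n : ℤ => (1 + ((n : ℝ) - α) ^ 2) ^ (-γ)) ∧
      (∑' n : ℤ, (1 + ((n : ℝ) - α) ^ 2) ^ (-γ)) ≤ S)
    (α β : ℝ) (F : ℤ → ℝ) (hF0 : ∀ n, 0 ≤ F n)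
    (hpt : ∀ n : ℤ, F n ≤ 2 ^ γ * ((1 + ((n : ℝ) - α) ^ 2) ^ (-γ)
      + (1 + ((n : ℝ) - β) ^ 2) ^ (-γ))) :
    (∑' n : ℤ, F n) ≤ 2 ^ γ * (S + S) := by
  obtain ⟨hsα, htα⟩ := hB α
  obtain ⟨hsβ, htβ⟩ := hB β
  have hsum : Summable (fun n : ℤ => 2 ^ γ * ((1 + ((n : ℝ) - α) ^ 2) ^ (-γ)
      + (1 + ((n : ℝ) - β) ^ 2) ^ (-γ))) := (hsα.add hsβ).mul_left _
  have hF : Summable F := hsum.of_nonneg_of_le hF0 hpt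
  calc (∑' n : ℤ, F n) ≤ ∑' n : ℤ, 2 ^ γ * ((1 + ((n : ℝ) - α) ^ 2) ^ (-γ)
      + (1 + ((n : ℝ) - β) ^ 2) ^ (-γ)) := Summable.tsum_le_tsum hpt hF hsum
    _ = 2 ^ γ * ((∑' n : ℤ, (1 + ((n : ℝ) - α) ^ 2) ^ (-γ))
        + ∑' n : ℤ, (1 + ((n : ℝ) - β) ^ 2) ^ (-γ)) := by
        rw [tsum_mul_left, Summable.tsum_add hsα hsβ]
    _ ≤ 2 ^ γ * (S + S) := by
        have h2γ : (0:ℝ) ≤ 2 ^ γ := by positivity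
        nlinarith

/-- For `γ > 1/2`, `∑_{n∈ℤ} ⟨z + n(n - y)⟩^{-γ}` is bounded uniformly in `y, z ∈ ℝ`. -/
theorem stmt7 (γ : ℝ) (hγ : 1 / 2 < γ) :
    ∃ C : ℝ, 0 < C ∧ ∀ y z : ℝ,
      (∑' n : ℤ, jb (z + (n : ℝ) * ((n : ℝ) - y)) ^ (-γ)) ≤ C := by
  have hγ0 : 0 < γ := by linarith
  obtain ⟨S, hS, hB⟩ := sumB γ hγ
  refine ⟨2 ^ γ * (S + S), by positivity, fun y z => ?_⟩
  have hF0 : ∀ n : ℤ, 0 ≤ jb (z + (n : ℝ) * ((n : ℝ) - y)) ^ (-γ) := by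
    intro n
    rw [jb_rpow]
    positivity
  by_cases hD : 0 ≤ y ^ 2 - 4 * z
  · set d := Real.sqrt (y ^ 2 - 4 * z) with hd
    have hd2 : d ^ 2 = y ^ 2 - 4 * z := Real.sq_sqrt hD
    refine sum_bound γ S hB ((y + d) / 2) ((y - d) / 2) _ hF0 fun n => ?_
    have hq : z + (n : ℝ) * ((n : ℝ) - y)
        = ((n : ℝ) - (y + d) / 2) * ((n : ℝ) - (y - d) / 2) := by
      linear_combination ((1 : ℝ) / 4) * hd2
    rw [jb_rpow, hq]
    exact pt1 γ hγ0 _ _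
  · refine sum_bound γ S hB (y / 2) (y / 2) _ hF0 fun n => ?_
    have hq : z + (n : ℝ) * ((n : ℝ) - y)
        = ((n : ℝ) - y / 2) ^ 2 + (z - y ^ 2 / 4) := by ring
    rw [jb_rpow, hq]
    exact pt2 γ hγ0 _ _ (by nlinarith [not_le.mp hD])
end

section
/- Let γ₁ > 1/2. Then there is a constant C > 0 such that for every k ∈ ℤ and every τ ∈ ℝ, ∑_{n∈ℤ} ⟨-τ + (n+k)² + n²⟩^{-γ₁} ≤ C. -/
set_option maxHeartbeats 1000000 in
/-- For `γ₁ > 1/2`, `∑_{n∈ℤ} ⟨-τ + (n+k)² + n²⟩^{-γ₁}` is bounded uniformly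
in `k ∈ ℤ` and `τ ∈ ℝ`. -/
theorem stmt8 (γ₁ : ℝ) (hγ : 1 / 2 < γ₁) :
    ∃ C : ℝ, 0 < C ∧ ∀ (k : ℤ) (τ : ℝ),
      (∑' n : ℤ, jb (-τ + ((n : ℝ) + (k : ℝ)) ^ 2 + (n : ℝ) ^ 2) ^ (-γ₁)) ≤ C := by
  -- the majorant
  set G : ℤ → ℝ := fun p => (1024 : ℝ) ^ (γ₁ / 2) * (1 + |(p : ℝ)|) ^ (-(2 * γ₁)) with hGdef
  have hGnn : ∀ p, 0 ≤ G p := fun p =>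
    mul_nonneg (Real.rpow_nonneg (by norm_num) _) (Real.rpow_nonneg (by positivity) _)
  have hnat : Summable (fun n : ℕ => (1 + (n : ℝ)) ^ (-(2 * γ₁))) := by
    have := (summable_nat_add_iff (f := fun n : ℕ => (n : ℝ) ^ (-(2 * γ₁))) 1).2
      (Real.summable_nat_rpow.2 (by linarith))
    refine this.congr fun n => ?_
    push_cast; ring_nf
  have hGsum : Summable G := by
    refine Summable.mul_left _ ?_
    apply Summable.of_nat_of_neg
    · refine hnat.congr fun n => ?_
      simp
    · refine hnat.congr fun n => ?_
      simp
  have h0 : 0 ≤ ∑' p, G p := tsum_nonneg hGnn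
  refine ⟨2 * (∑' p, G p) + 1, by linarith, ?_⟩
  intro k τ
  set c : ℝ := τ - (k : ℝ) ^ 2 / 2 with hc
  set r : ℝ := Real.sqrt (max (2 * c) 0) with hrdef
  have hr0 : 0 ≤ r := Real.sqrt_nonneg _
  have hr2 : r ^ 2 = max (2 * c) 0 := Real.sq_sqrt (le_max_right _ _)
  set m₀ : ℤ := round r with hm₀def
  have hm₀ : |r - (m₀ : ℝ)| ≤ 1 / 2 := abs_sub_round r
  -- the key pointwise bound
  have key : ∀ n : ℤ, jb (-τ + ((n : ℝ) + (k : ℝ)) ^ 2 + (n : ℝ) ^ 2) ^ (-γ₁) ≤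
      G (2 * n + k - m₀) + G (2 * n + k + m₀) := by
    intro n
    set m : ℤ := 2 * n + k with hm
    set x : ℝ := -τ + ((n : ℝ) + (k : ℝ)) ^ 2 + (n : ℝ) ^ 2 with hxdef
    have hx : x = (m : ℝ) ^ 2 / 2 - c := by
      rw [hxdef, hc, hm]; push_cast; ring
    set d : ℝ := abs (abs ((m:ℝ)) - r) with hd
    clear_value d x m m₀ r c
    have hd0 : 0 ≤ d := by rw [hd]; positivity
    have habs : (0:ℝ) ≤ |(m:ℝ)| := abs_nonneg _
    have hsq : |(m:ℝ)| ^ 2 = (m:ℝ) ^ 2 := sq_abs _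
    have h1 : d ^ 2 / 2 ≤ |x| := by
      rcases le_or_gt (r ^ 2) ((m : ℝ) ^ 2) with h | h
      · have hcr : 2 * c ≤ r ^ 2 := hr2 ▸ le_max_left _ _
        have hmr : r ≤ |(m : ℝ)| := by nlinarith
        have hdval : d = |(m:ℝ)| - r := by rw [hd, abs_of_nonneg (by linarith)]
        have hx0 : ((m : ℝ) ^ 2 - r ^ 2) / 2 ≤ x := by rw [hx]; linarith
        have h2 : d ^ 2 ≤ (m : ℝ) ^ 2 - r ^ 2 := by rw [hdval]; nlinarith
        calc d ^ 2 / 2 ≤ ((m : ℝ) ^ 2 - r ^ 2) / 2 := by linarith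
          _ ≤ x := hx0
          _ ≤ |x| := le_abs_self x
      · have hrpos : 0 < r ^ 2 := lt_of_le_of_lt (by positivity) h
        have h2c : r ^ 2 = 2 * c := by
          rcases max_choice (2 * c) 0 with h' | h'
          · rw [hr2, h']
          · exfalso; rw [hr2, h'] at hrpos; exact lt_irrefl _ hrpos
        have hxval : x = ((m : ℝ) ^ 2 - r ^ 2) / 2 := by rw [hx]; linarith
        have hmr : |(m : ℝ)| ≤ r := by nlinarith
        have hdval : d = r - |(m:ℝ)| := by rw [hd, abs_of_nonpos (by linarith)]; ring
        have hxneg : x ≤ 0 := by rw [hxval]; nlinarith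
        have h2 : d ^ 2 ≤ r ^ 2 - (m : ℝ) ^ 2 := by rw [hdval]; nlinarith
        rw [abs_of_nonpos hxneg, hxval]; linarith
    have hsq2 : (d ^ 2 / 2) ^ 2 ≤ |x| ^ 2 := pow_le_pow_left₀ (by positivity) h1 2
    have h2 : 1 + d ^ 4 / 4 ≤ 1 + x ^ 2 := by
      rw [sq_abs] at hsq2
      have e : (d ^ 2 / 2) ^ 2 = d ^ 4 / 4 := by ring
      linarith
    have hjb : jb x ^ (-γ₁) ≤ (1 + d ^ 4 / 4) ^ (-(γ₁ / 2)) := by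
      have h1x : (0 : ℝ) < 1 + x ^ 2 := by positivity
      have heq : jb x ^ (-γ₁) = (1 + x ^ 2) ^ (-(γ₁ / 2)) := by
        unfold jb
        rw [Real.sqrt_eq_rpow, ← Real.rpow_mul h1x.le]
        congr 1; ring
      rw [heq]
      exact Real.rpow_le_rpow_of_nonpos (by positivity) h2 (by linarith)
    have claim : ∀ p : ℤ, |(p:ℝ)| - 1/2 ≤ d → (1 + d ^ 4 / 4) ^ (-(γ₁/2)) ≤ G p := by
      intro p hp
      have key2 : (1 + |(p:ℝ)|) ^ 4 / 1024 ≤ 1 + d ^ 4 / 4 := by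
        rcases eq_or_ne p 0 with rfl | hpne
        · simp only [Int.cast_zero, abs_zero, add_zero]
          nlinarith [pow_nonneg hd0 4]
        · have h1p : (1:ℝ) ≤ |(p:ℝ)| := by
            have h := Int.one_le_abs hpne
            calc (1:ℝ) ≤ ((|p| : ℤ) : ℝ) := by exact_mod_cast h
              _ = |(p:ℝ)| := by push_cast; rfl
          have hdp : (1 + |(p:ℝ)|)/4 ≤ d := by linarith
          have h4 : ((1 + |(p:ℝ)|)/4) ^ 4 ≤ d ^ 4 := pow_le_pow_left₀ (by linarith) hdp 4
          nlinarith [h4]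
      have hstep := Real.rpow_le_rpow_of_nonpos (by positivity) key2
        (by linarith : -(γ₁/2) ≤ 0)
      refine hstep.trans (le_of_eq ?_)
      rw [Real.div_rpow (by positivity) (by norm_num)]
      rw [Real.rpow_neg (by norm_num : (0:ℝ) ≤ 1024)]
      rw [div_inv_eq_mul]
      rw [← Real.rpow_natCast (1 + |(p:ℝ)|) 4, ← Real.rpow_mul (by positivity)]
      have he4 : ((4:ℕ):ℝ) * (-(γ₁/2)) = -(2*γ₁) := by push_cast; ring
      rw [he4]
      simp only [hGdef]
      ring
    rcases le_or_gt 0 m with hm0 | hm0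
    · have hmabs : |(m:ℝ)| = (m:ℝ) := abs_of_nonneg (by exact_mod_cast hm0)
      have hp : |((m - m₀ : ℤ):ℝ)| - 1/2 ≤ d := by
        have h1' : |(m:ℝ) - m₀| ≤ |(m:ℝ) - r| + |r - m₀| := abs_sub_le _ _ _
        have hdd : d = |(m:ℝ) - r| := by rw [hd, hmabs]
        push_cast
        linarith [hm₀]
      exact le_trans (hjb.trans (claim _ hp)) (le_add_of_nonneg_right (hGnn _))
    · have hmabs : |(m:ℝ)| = -(m:ℝ) := abs_of_neg (by exact_mod_cast hm0)
      have hp : |((m + m₀ : ℤ):ℝ)| - 1/2 ≤ d := by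
        have h1' : |(-(m:ℝ)) - m₀| ≤ |(-(m:ℝ)) - r| + |r - m₀| := abs_sub_le _ _ _
        have hdd : d = |(-(m:ℝ)) - r| := by rw [hd, hmabs]
        have habs2 : |(m:ℝ) + (m₀:ℝ)| = |(-(m:ℝ)) - (m₀:ℝ)| := by
          rw [← abs_neg ((m:ℝ) + (m₀:ℝ))]; congr 1; ring
        push_cast
        linarith [hm₀]
      exact le_trans (hjb.trans (claim _ hp)) (le_add_of_nonneg_left (hGnn _))
  have hnn : ∀ n : ℤ, 0 ≤ jb (-τ + ((n:ℝ) + (k:ℝ)) ^ 2 + (n:ℝ) ^ 2) ^ (-γ₁) :=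
    fun n => Real.rpow_nonneg (Real.sqrt_nonneg _) _
  have hi₁ : Function.Injective (fun n : ℤ => 2 * n + k - m₀) := by
    intro a b h; dsimp only at h; omega
  have hi₂ : Function.Injective (fun n : ℤ => 2 * n + k + m₀) := by
    intro a b h; dsimp only at h; omega
  have hS₁ : Summable (fun n : ℤ => G (2 * n + k - m₀)) := hGsum.comp_injective hi₁
  have hS₂ : Summable (fun n : ℤ => G (2 * n + k + m₀)) := hGsum.comp_injective hi₂
  have hM : Summable (fun n : ℤ => G (2 * n + k - m₀) + G (2 * n + k + m₀)) := hS₁.add hS₂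
  have hT : Summable (fun n : ℤ => jb (-τ + ((n:ℝ) + (k:ℝ)) ^ 2 + (n:ℝ) ^ 2) ^ (-γ₁)) :=
    Summable.of_nonneg_of_le hnn key hM
  calc (∑' n : ℤ, jb (-τ + ((n:ℝ) + (k:ℝ)) ^ 2 + (n:ℝ) ^ 2) ^ (-γ₁))
      ≤ ∑' n : ℤ, (G (2 * n + k - m₀) + G (2 * n + k + m₀)) := Summable.tsum_le_tsum key hT hM
    _ = (∑' n : ℤ, G (2 * n + k - m₀)) + ∑' n : ℤ, G (2 * n + k + m₀) := Summable.tsum_add hS₁ hS₂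
    _ ≤ (∑' p, G p) + ∑' p, G p := add_le_add
        (Summable.tsum_le_tsum_of_inj _ hi₁ (fun c _ => hGnn c) (fun n => le_rfl) hS₁ hGsum)
        (Summable.tsum_le_tsum_of_inj _ hi₂ (fun c _ => hGnn c) (fun n => le_rfl) hS₂ hGsum)
    _ ≤ 2 * (∑' p, G p) + 1 := by linarith
end
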